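/- Let F be a non-degenerate cdf on ℝ with finite first absolute moment, c > 0 and δ < 0, and suppose F solves problem P_{c,δ}. Then: (a) there exists a strictly increasing sequence (a_n)_{n≥0} with a_0 = α_F and a_{n+1} − a_n ≥ |δ| for all n ≥ 0 such that supp(F) = {a_n : n ≥ 0}; in particular ω_F = ∞. (b) With G(a_0) ∈ (0,1), the survival function satisfies G(a_n) = G(a_0)·∏_{i=1}^{n} (1 + c(a_{i+1} − a_i))^{−1} for all n ≥ 1. -/

import Mathlib

open MeasureTheory Set

/-- Survival function `G(x) = 1 - F(x) = μ(x, ∞)` of the distribution `μ`. -/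
noncomputable def survG (μ : Measure ℝ) (x : ℝ) : ℝ := (μ (Set.Ioi x)).toReal

/-- `H(x) = G(x+δ) - c ∫_x^∞ G(t) dt`. -/
noncomputable def funH (μ : Measure ℝ) (c δ x : ℝ) : ℝ :=
  survG μ (x + δ) - c * ∫ t in Set.Ioi x, survG μ t

/-- The support of the distribution: points every neighbourhood of which has positive mass. -/
def suppF (μ : Measure ℝ) : Set ℝ :=
  {x | ∀ ε > 0, 0 < μ (Set.Ioo (x - ε) (x + ε))}

/-- The set `R` of continuity points `x` of `F` in the support such that `x + δ` is an atom. -/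
def Rset (μ : Measure ℝ) (δ : ℝ) : Set ℝ :=
  {x ∈ suppF μ | μ {x} = 0 ∧ 0 < μ {x + δ}}

/-- `T = supp(F) \ R`. -/
def Tset (μ : Measure ℝ) (δ : ℝ) : Set ℝ := suppF μ \ Rset μ δ

section auxlemmas

variable {μ : Measure ℝ}

lemma survG_nonneg (μ : Measure ℝ) (x : ℝ) : 0 ≤ survG μ x := ENNReal.toReal_nonneg

lemma survG_le_one (μ : Measure ℝ) [IsProbabilityMeasure μ] (x : ℝ) : survG μ x ≤ 1 := by
  have := prob_le_one (μ := μ) (s := Set.Ioi x)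
  simpa [survG] using ENNReal.toReal_le_of_le_ofReal zero_le_one (by simpa using this)

lemma survG_anti (μ : Measure ℝ) [IsProbabilityMeasure μ] : Antitone (survG μ) :=
  fun _ _ hxy =>
  ENNReal.toReal_mono (measure_ne_top μ _) (measure_mono (Set.Ioi_subset_Ioi hxy))

lemma survG_diff (μ : Measure ℝ) [IsProbabilityMeasure μ] {x y : ℝ} (hxy : x ≤ y) :
    survG μ x - survG μ y = (μ (Set.Ioc x y)).toReal := by
  have h : μ (Set.Ioi x) = μ (Set.Ioc x y) + μ (Set.Ioi y) := by
    rw [← measure_union (by simp [Set.disjoint_left]) measurableSet_Ioi,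
      Set.Ioc_union_Ioi_eq_Ioi hxy]
  have h1 := measure_ne_top μ (Set.Ioc x y)
  have h2 := measure_ne_top μ (Set.Ioi y)
  rw [survG, survG, h, ENNReal.toReal_add h1 h2]
  ring

lemma survG_pos (μ : Measure ℝ) [IsProbabilityMeasure μ] {x s : ℝ} (hs : s ∈ suppF μ)
    (hxs : x < s) : 0 < survG μ x := by
  have h := hs (s - x) (by linarith)
  have hsub : Set.Ioo (s - (s - x)) (s + (s - x)) ⊆ Set.Ioi x := by
    intro t ht; simp only [Set.mem_Ioo] at ht; simp only [Set.mem_Ioi]; linarith [ht.1]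
  have : 0 < μ (Set.Ioi x) := lt_of_lt_of_le h (measure_mono hsub)
  exact ENNReal.toReal_pos this.ne' (measure_ne_top μ _)

lemma suppF_closed (μ : Measure ℝ) : IsClosed (suppF μ) := by
  rw [← isOpen_compl_iff, Metric.isOpen_iff]
  intro x hx
  simp only [suppF, Set.mem_compl_iff, Set.mem_setOf_eq, not_forall, not_lt] at hx
  obtain ⟨ε, hε, hle⟩ := hx
  have h0 : μ (Set.Ioo (x - ε) (x + ε)) = 0 := le_antisymm hle zero_le
  refine ⟨ε / 2, by linarith, fun y hy => ?_⟩
  simp only [Metric.mem_ball, Real.dist_eq] at hy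
  simp only [suppF, Set.mem_compl_iff, Set.mem_setOf_eq, not_forall, not_lt]
  refine ⟨ε / 2, by linarith, le_of_eq (measure_mono_null ?_ h0)⟩
  intro t ht
  simp only [Set.mem_Ioo] at ht ⊢
  rw [abs_lt] at hy
  constructor <;> linarith [ht.1, ht.2, hy.1, hy.2]

lemma measure_compl_suppF (μ : Measure ℝ) : μ (suppF μ)ᶜ = 0 := by
  set s : Set (ℚ × ℚ) := {q | μ (Set.Ioo (q.1 : ℝ) (q.2 : ℝ)) = 0} with hs
  have hsub : (suppF μ)ᶜ ⊆ ⋃ q ∈ s, Set.Ioo (q.1 : ℝ) (q.2 : ℝ) := by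
    intro x hx
    simp only [suppF, Set.mem_compl_iff, Set.mem_setOf_eq, not_forall, not_lt] at hx
    obtain ⟨ε, hε, hle⟩ := hx
    obtain ⟨p, hp1, hp2⟩ := exists_rat_btwn (show x - ε < x by linarith)
    obtain ⟨q, hq1, hq2⟩ := exists_rat_btwn (show x < x + ε by linarith)
    refine Set.mem_biUnion (show (p, q) ∈ s from ?_) ⟨hp2, hq1⟩
    simp only [hs, Set.mem_setOf_eq]
    refine measure_mono_null (fun t ht => ?_) (le_antisymm hle zero_le)
    simp only [Set.mem_Ioo] at ht ⊢
    exact ⟨by linarith [ht.1], by linarith [ht.2]⟩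
  refine measure_mono_null hsub (measure_biUnion_null_iff (Set.to_countable s) |>.mpr ?_)
  exact fun q hq => hq

lemma null_of_disjoint_suppF (μ : Measure ℝ) {A : Set ℝ} (hA : A ∩ suppF μ = ∅) : μ A = 0 := by
  refine measure_mono_null (fun x hx => ?_) (measure_compl_suppF μ)
  intro hxs
  exact Set.eq_empty_iff_forall_notMem.mp hA x ⟨hx, hxs⟩

lemma measure_pos_of_mem_suppF (μ : Measure ℝ) {x a b : ℝ} (hx : x ∈ suppF μ) (ha : a < x)
    (hb : x < b) : 0 < μ (Set.Ioo a b) := by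
  have h := hx (min (x - a) (b - x)) (by simp only [lt_min_iff]; constructor <;> linarith)
  refine lt_of_lt_of_le h (measure_mono fun t ht => ?_)
  simp only [Set.mem_Ioo] at ht ⊢
  have h1 := min_le_left (x - a) (b - x); have h2 := min_le_right (x - a) (b - x)
  constructor <;> nlinarith [ht.1, ht.2]

lemma suppF_nonempty (μ : Measure ℝ) [IsProbabilityMeasure μ] : (suppF μ).Nonempty := by
  by_contra h
  rw [Set.not_nonempty_iff_eq_empty] at h
  have := measure_compl_suppF μ
  rw [h, Set.compl_empty] at this
  simp [measure_univ] at this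

lemma measure_Rset (μ : Measure ℝ) [IsProbabilityMeasure μ] (δ : ℝ) : μ (Rset μ δ) = 0 := by
  have hatoms : Set.Countable {t : ℝ | 0 < μ {t}} := by
    have h0 := Measure.countable_meas_level_set_pos (μ := μ) (g := fun x : ℝ => x) measurable_id
    exact h0
  have hcnt : Set.Countable (Rset μ δ) := by
    have : Rset μ δ ⊆ (fun x : ℝ => x + δ) ⁻¹' {t : ℝ | 0 < μ {t}} := by
      intro x hx; exact hx.2.2
    exact ((hatoms.preimage (add_left_injective δ))).mono this
  have : Rset μ δ = ⋃ x ∈ Rset μ δ, {x} := by simp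
  rw [this, measure_biUnion_null_iff hcnt]
  intro x hx
  exact hx.2.1

lemma exists_Tset_mem (μ : Measure ℝ) [IsProbabilityMeasure μ] (δ : ℝ) {A : Set ℝ}
    (hA : μ A ≠ 0) : ∃ x ∈ A, x ∈ Tset μ δ := by
  have hN : μ ((suppF μ)ᶜ ∪ Rset μ δ) = 0 :=
    measure_union_null (measure_compl_suppF μ) (measure_Rset μ δ)
  by_contra h
  push_neg at h
  refine hA (measure_mono_null (fun x hx => ?_) hN)
  rcases Classical.em (x ∈ suppF μ) with hs | hs
  · exact Or.inr (by_contra fun hR => h x hx ⟨hs, hR⟩)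
  · exact Or.inl hs

lemma integrableOn_survG (μ : Measure ℝ) [IsProbabilityMeasure μ]
    (hint : Integrable (fun x : ℝ => x) μ) (x : ℝ) :
    IntegrableOn (survG μ) (Set.Ioi x) := by
  have hanti : Antitone (survG μ) := survG_anti μ
  refine ⟨hanti.measurable.aestronglyMeasurable.restrict, ?_⟩
  refine (hasFiniteIntegral_iff_ofReal
    (Filter.Eventually.of_forall fun t => ENNReal.toReal_nonneg)).mpr ?_
  show (∫⁻ t in Set.Ioi x, ENNReal.ofReal (survG μ t)) < ⊤
  have e1 : ∫⁻ t in Set.Ioi x, ENNReal.ofReal (survG μ t) = ∫⁻ t in Set.Ioi x, μ (Set.Ioi t) :=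
    lintegral_congr fun t => ENNReal.ofReal_toReal (measure_ne_top μ _)
  rw [e1]
  have e2 : ∫⁻ t in Set.Ioi x, μ (Set.Ioi t) = ∫⁻ t in Set.Ioi (0:ℝ), μ (Set.Ioi (t + x)) := by
    have hmp : MeasurePreserving (fun t : ℝ => t + x) volume volume :=
      measurePreserving_add_right volume x
    have := hmp.setLIntegral_comp_emb (MeasurableEquiv.addRight x).measurableEmbedding
      (fun t => μ (Set.Ioi t)) (Set.Ioi 0)
    rw [this]
    congr 1
    simpa using Set.image_add_const_Ioi (a := x) (b := (0:ℝ))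
  rw [e2]
  have e3 : ∫⁻ t in Set.Ioi (0:ℝ), μ (Set.Ioi (t + x)) =
      ∫⁻ ω, ENNReal.ofReal (max (ω - x) 0) ∂μ := by
    have hf : AEMeasurable (fun ω : ℝ => max (ω - x) 0) μ :=
      ((measurable_id.sub_const x).max measurable_const).aemeasurable
    have hnn : 0 ≤ᵐ[μ] (fun ω : ℝ => max (ω - x) 0) :=
      Filter.Eventually.of_forall fun ω => le_max_right _ _
    rw [lintegral_eq_lintegral_meas_lt μ hnn hf]
    refine setLIntegral_congr_fun measurableSet_Ioi (fun t ht => ?_)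
    congr 1
    ext ω
    simp only [Set.mem_Ioi, Set.mem_setOf_eq, lt_max_iff]
    constructor
    · intro h; left; linarith
    · rintro (h | h); · linarith
      · simp only [Set.mem_Ioi] at ht; linarith
  rw [e3]
  calc ∫⁻ ω, ENNReal.ofReal (max (ω - x) 0) ∂μ
      ≤ ∫⁻ ω, (ENNReal.ofReal |ω| + ENNReal.ofReal |x|) ∂μ := by
        refine lintegral_mono fun ω => ?_
        rw [← ENNReal.ofReal_add (abs_nonneg _) (abs_nonneg _)]
        refine ENNReal.ofReal_le_ofReal (max_le ?_ (by positivity))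
        have h1 := le_abs_self ω; have h2 := neg_abs_le x; linarith
    _ = (∫⁻ ω, ENNReal.ofReal |ω| ∂μ) + ENNReal.ofReal |x| := by
        rw [lintegral_add_right _ measurable_const, lintegral_const, measure_univ, mul_one]
    _ < ⊤ := by
        have h1 : (∫⁻ ω, ENNReal.ofReal |ω| ∂μ) < ⊤ := by
          have := hint.hasFiniteIntegral
          simpa [HasFiniteIntegral, Real.enorm_eq_ofReal_abs] using this
        exact ENNReal.add_lt_top.mpr ⟨h1, ENNReal.ofReal_lt_top⟩

lemma Phi_sub (μ : Measure ℝ) [IsProbabilityMeasure μ]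
    (hI : ∀ x : ℝ, IntegrableOn (survG μ) (Set.Ioi x)) {x y : ℝ} (hxy : x ≤ y) :
    (∫ t in Set.Ioi x, survG μ t) - ∫ t in Set.Ioi y, survG μ t
      = ∫ t in Set.Ioc x y, survG μ t := by
  have hu : Set.Ioc x y ∪ Set.Ioi y = Set.Ioi x := Set.Ioc_union_Ioi_eq_Ioi hxy
  have hd : Disjoint (Set.Ioc x y) (Set.Ioi y) := by
    rw [Set.disjoint_left]; intro t ht1 ht2
    exact absurd ht2 (by simp only [Set.mem_Ioi, not_lt]; exact ht1.2)
  rw [← hu, setIntegral_union hd measurableSet_Ioi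
    ((hI x).mono_set (by rw [← hu]; exact Set.subset_union_left))
    ((hI x).mono_set (by rw [← hu]; exact Set.subset_union_right))]
  ring

lemma Phi_nonneg (μ : Measure ℝ) (x : ℝ) : 0 ≤ ∫ t in Set.Ioi x, survG μ t :=
  setIntegral_nonneg measurableSet_Ioi fun _ _ => ENNReal.toReal_nonneg

lemma integral_Ioc_ge (μ : Measure ℝ) [IsProbabilityMeasure μ]
    (hI : ∀ x : ℝ, IntegrableOn (survG μ) (Set.Ioi x)) {x y : ℝ} (hxy : x ≤ y) :
    (y - x) * survG μ y ≤ ∫ t in Set.Ioc x y, survG μ t := by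
  have hconst : ∫ _t in Set.Ioc x y, survG μ y = (y - x) * survG μ y := by
    rw [setIntegral_const, measureReal_def, Real.volume_Ioc, smul_eq_mul,
      ENNReal.toReal_ofReal (by linarith)]
  rw [← hconst]
  refine setIntegral_mono_on ((integrableOn_const_iff enorm_ne_top).mpr (Or.inr ?_))
    ((hI x).mono_set Set.Ioc_subset_Ioi_self) measurableSet_Ioc fun t ht => ?_
  · rw [Real.volume_Ioc]; exact ENNReal.ofReal_lt_top
  · exact ENNReal.toReal_mono (measure_ne_top μ _)
      (measure_mono (Set.Ioi_subset_Ioi ht.2))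

lemma integral_Ioc_le (μ : Measure ℝ) [IsProbabilityMeasure μ]
    (hI : ∀ x : ℝ, IntegrableOn (survG μ) (Set.Ioi x)) {x y : ℝ} (hxy : x ≤ y) :
    (∫ t in Set.Ioc x y, survG μ t) ≤ y - x := by
  have hconst : ∫ _t in Set.Ioc x y, (1:ℝ) = y - x := by
    rw [setIntegral_const, measureReal_def, Real.volume_Ioc, smul_eq_mul,
      ENNReal.toReal_ofReal (by linarith), mul_one]
  rw [← hconst]
  refine setIntegral_mono_on ((hI x).mono_set Set.Ioc_subset_Ioi_self)
    ((integrableOn_const_iff enorm_ne_top).mpr (Or.inr ?_)) measurableSet_Ioc fun t ht => ?_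
  · rw [Real.volume_Ioc]; exact ENNReal.ofReal_lt_top
  · have : μ (Set.Ioi t) ≤ 1 := prob_le_one
    exact ENNReal.toReal_le_of_le_ofReal zero_le_one (by simpa using this)

end auxlemmas

/-- For `δ < 0`, if `F` solves `P_{c,δ}` then its support is a strictly increasing sequence
`(a_n)` starting at `α_F`, with gaps at least `|δ|` (in particular `ω_F = ∞`), and the
survival function satisfies `G(a_n) = G(a_0) ∏_{i=1}^n (1 + c(a_{i+1} - a_i))⁻¹`. -/
theorem stmt6 (μ : Measure ℝ) [IsProbabilityMeasure μ]
    (hnd : ∀ x : ℝ, μ {x} ≠ 1)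
    (hint : Integrable (fun x : ℝ => x) μ)
    (c δ : ℝ) (hc : 0 < c) (hδ : δ < 0)
    (hsol : ∀ x ∈ Tset μ δ, funH μ c δ x = 0) :
    ∃ a : ℕ → ℝ, StrictMono a ∧ a 0 = sInf (suppF μ) ∧
      (∀ n : ℕ, |δ| ≤ a (n + 1) - a n) ∧
      suppF μ = Set.range a ∧
      ¬ BddAbove (suppF μ) ∧
      0 < survG μ (a 0) ∧ survG μ (a 0) < 1 ∧
      ∀ n : ℕ, 1 ≤ n →
        survG μ (a n) = survG μ (a 0) * ∏ i ∈ Finset.Icc 1 n, (1 + c * (a (i + 1) - a i))⁻¹ := by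
  classical
  have hI : ∀ x : ℝ, IntegrableOn (survG μ) (Set.Ioi x) := integrableOn_survG μ hint
  have hanti : Antitone (survG μ) := survG_anti μ
  have hSne : (suppF μ).Nonempty := suppF_nonempty μ
  have hSclosed : IsClosed (suppF μ) := suppF_closed μ
  have hHz : ∀ x ∈ Tset μ δ, survG μ (x + δ) = c * ∫ t in Set.Ioi x, survG μ t := by
    intro x hx; have := hsol x hx; unfold funH at this; linarith
  -- S is bounded below
  have hBB : BddBelow (suppF μ) := by
    by_contra hBB
    rw [not_bddBelow_iff] at hBB
    obtain ⟨s0, hs0⟩ := hSne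
    have hG0 : 0 < survG μ (s0 - 1) := survG_pos μ hs0 (by linarith)
    have hcinv : 0 < 1/(c * survG μ (s0 - 1)) := by positivity
    obtain ⟨s, hsS, hs⟩ := hBB (s0 - 1 - 1/(c * survG μ (s0 - 1)) - 4)
    have hpos : μ (Set.Ioo (s-1) (s+1)) ≠ 0 :=
      (measure_pos_of_mem_suppF μ hsS (by linarith) (by linarith)).ne'
    obtain ⟨x, hxA, hxT⟩ := exists_Tset_mem μ δ hpos
    have hxA' : x < s + 1 := hxA.2
    have hxm0 : x ≤ s0 - 1 := by linarith
    have hH := hHz x hxT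
    have h1 : (∫ t in Set.Ioi x, survG μ t) ≤ 1 / c := by
      rw [le_div_iff₀ hc, mul_comm, ← hH]
      exact survG_le_one μ _
    have h2 : (s0 - 1 - x) * survG μ (s0 - 1) ≤ ∫ t in Set.Ioi x, survG μ t := by
      have ha := integral_Ioc_ge μ hI hxm0
      have hb := Phi_sub μ hI hxm0
      have hcc := Phi_nonneg μ (s0 - 1)
      linarith
    have key : (1/(c * survG μ (s0 - 1))) * survG μ (s0 - 1) = 1/c := by
      field_simp
    have hgt : 1/(c * survG μ (s0 - 1)) + 1 ≤ s0 - 1 - x := by linarith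
    have hmul := mul_le_mul_of_nonneg_right hgt hG0.le
    nlinarith [hG0]
  -- S is not bounded above
  have hNBA : ¬ BddAbove (suppF μ) := by
    intro hBA
    set ω := sSup (suppF μ) with hω
    have hωS : ω ∈ suppF μ := hSclosed.csSup_mem hSne hBA
    have hle : ∀ s ∈ suppF μ, s ≤ ω := fun s hs => le_csSup hBA hs
    have hPhiω : (∫ t in Set.Ioi ω, survG μ t) = 0 := by
      rw [setIntegral_congr_fun measurableSet_Ioi (g := fun _ => (0:ℝ))]
      · simp
      · intro t ht
        have hz : μ (Set.Ioi t) = 0 := by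
          refine null_of_disjoint_suppF μ (Set.eq_empty_iff_forall_notMem.mpr ?_)
          rintro y ⟨hy1, hy2⟩
          exact absurd (hle y hy2) (not_le.mpr (lt_trans ht hy1))
        simp [survG, hz]
    have hGωδ : 0 < survG μ (ω + δ) := survG_pos μ hωS (by linarith)
    set ε := min (-δ/2) (survG μ (ω+δ) / (2*c)) with hε
    have hε0 : 0 < ε := lt_min (by linarith) (by positivity)
    have hpos : μ (Set.Ioo (ω-ε) (ω+ε)) ≠ 0 :=
      (measure_pos_of_mem_suppF μ hωS (by linarith) (by linarith)).ne'
    obtain ⟨x, hxA, hxT⟩ := exists_Tset_mem μ δ hpos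
    have hxω : x ≤ ω := hle x hxT.1
    have hxl : ω - ε < x := hxA.1
    have hH := hHz x hxT
    have hPhix : (∫ t in Set.Ioi x, survG μ t) ≤ ε := by
      have hsub := Phi_sub μ hI hxω
      have hle2 := integral_Ioc_le μ hI hxω
      linarith
    have hlow : survG μ (ω + δ) ≤ survG μ (x + δ) := hanti (by linarith)
    have h1 : survG μ (ω + δ) ≤ c * ε := by
      calc survG μ (ω + δ) ≤ survG μ (x + δ) := hlow
        _ = c * ∫ t in Set.Ioi x, survG μ t := hH
        _ ≤ c * ε := mul_le_mul_of_nonneg_left hPhix hc.le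
    have h2 : c * ε ≤ survG μ (ω+δ)/2 := by
      calc c * ε ≤ c * (survG μ (ω+δ) / (2*c)) :=
            mul_le_mul_of_nonneg_left (min_le_right _ _) hc.le
        _ = survG μ (ω+δ)/2 := by field_simp
    linarith
  -- G is positive everywhere
  have hGpos : ∀ x : ℝ, 0 < survG μ x := by
    intro x
    obtain ⟨s, hsS, hxs⟩ := not_bddAbove_iff.mp hNBA x
    exact survG_pos μ hsS hxs
  -- the gap lemma
  have gap : ∀ x y : ℝ, x < y → x ∈ Tset μ δ → y ∈ Tset μ δ →
      μ (Set.Ioc (x + δ) (y + δ)) = 0 → False := by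
    intro x y hxy hxT hyT hnull
    have h1 : survG μ (x + δ) = survG μ (y + δ) := by
      have hdiff := survG_diff μ (show x + δ ≤ y + δ by linarith)
      rw [hnull] at hdiff; simp only [ENNReal.toReal_zero] at hdiff; linarith
    have e1 := hHz x hxT
    have e2 := hHz y hyT
    have h2 : (∫ t in Set.Ioi x, survG μ t) = ∫ t in Set.Ioi y, survG μ t := by
      rw [h1, e2] at e1
      exact (mul_left_cancel₀ hc.ne' e1).symm
    have h3 := integral_Ioc_ge μ hI hxy.le
    have h4 := Phi_sub μ hI hxy.le
    nlinarith [hGpos y]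
  -- membership in T for points with a null left interval
  have memT_of : ∀ x y : ℝ, μ (Set.Ioo (x + δ) x) = 0 → y ∈ suppF μ → x < y → y < x - δ →
      y ∈ Tset μ δ := by
    intro x y h0 hyS h1 h2
    refine ⟨hyS, fun hR => ?_⟩
    have hsub : {y + δ} ⊆ Set.Ioo (x + δ) x := by
      intro t ht; simp only [Set.mem_singleton_iff] at ht; subst ht
      simp only [Set.mem_Ioo]; constructor <;> linarith
    have : μ {y + δ} = 0 := measure_mono_null hsub h0
    exact absurd hR.2.2 (by simp [this])
  -- no two support points in (x, x - δ)
  have notwo : ∀ x y z : ℝ, μ (Set.Ioo (x + δ) x) = 0 → y ∈ suppF μ → z ∈ suppF μ →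
      x < y → y < z → z < x - δ → False := by
    intro x y z h0 hyS hzS h1 h2 h3
    have hyT := memT_of x y h0 hyS h1 (by linarith)
    have hzT := memT_of x z h0 hzS (by linarith) h3
    refine gap y z h2 hyT hzT (measure_mono_null (fun t ht => ?_) h0)
    simp only [Set.mem_Ioc] at ht
    simp only [Set.mem_Ioo]
    constructor <;> linarith [ht.1, ht.2]
  -- the key structural step
  have step : ∀ x ∈ suppF μ, μ (Set.Ioo (x + δ) x) = 0 →
      x ∈ Tset μ δ ∧ Set.Ioo x (x - δ) ∩ suppF μ = ∅ := by
    intro x hxS h0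
    have hxT : x ∈ Tset μ δ := by
      by_contra hxT
      have hRx : x ∈ Rset μ δ := by_contra fun h => hxT ⟨hxS, h⟩
      have hx0 : μ {x} = 0 := hRx.2.1
      have haccum : ∀ ε : ℝ, 0 < ε → ε ≤ -δ → (Set.Ioo x (x + ε) ∩ suppF μ).Nonempty := by
        intro ε hε hεδ
        by_contra hem
        rw [Set.not_nonempty_iff_eq_empty] at hem
        have hnull2 : μ (Set.Ioo x (x + ε)) = 0 := null_of_disjoint_suppF μ hem
        have hpos := measure_pos_of_mem_suppF μ hxS (show x - ε < x by linarith)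
          (show x < x + ε by linarith)
        have hzero : μ (Set.Ioo (x - ε) (x + ε)) = 0 := by
          have hsub : Set.Ioo (x-ε) (x+ε) ⊆ (Set.Ioo (x+δ) x ∪ {x}) ∪ Set.Ioo x (x+ε) := by
            intro t ht
            simp only [Set.mem_Ioo] at ht
            rcases lt_trichotomy t x with h | h | h
            · exact Or.inl (Or.inl ⟨by linarith [ht.1], h⟩)
            · exact Or.inl (Or.inr (by simp [h]))
            · exact Or.inr ⟨h, ht.2⟩
          exact measure_mono_null hsub
            (measure_union_null (measure_union_null h0 hx0) hnull2)
        exact absurd hzero hpos.ne'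
      obtain ⟨y, hy⟩ := haccum (-δ) (by linarith) le_rfl
      have hyx : x < y := hy.1.1
      have hyδ : y < x - δ := by have := hy.1.2; linarith
      obtain ⟨z, hz⟩ := haccum (y - x) (by linarith) (by linarith)
      exact notwo x z y h0 hz.2 hy.2 hz.1.1 (by linarith [hz.1.2]) hyδ
    refine ⟨hxT, Set.eq_empty_iff_forall_notMem.mpr ?_⟩
    rintro y ⟨hy1, hy2⟩
    have hyT := memT_of x y h0 hy2 hy1.1 hy1.2
    refine gap x y hy1.1 hxT hyT (measure_mono_null (fun t ht => ?_) h0)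
    simp only [Set.mem_Ioc] at ht
    simp only [Set.mem_Ioo]
    constructor <;> linarith [ht.1, ht.2, hy1.2]
  -- building the next point
  have build : ∀ x ∈ suppF μ, μ (Set.Ioo (x + δ) x) = 0 →
      x ∈ Tset μ δ ∧ x - δ ≤ sInf (suppF μ ∩ Set.Ici (x - δ)) ∧
      sInf (suppF μ ∩ Set.Ici (x - δ)) ∈ suppF μ ∧
      Set.Ioo x (sInf (suppF μ ∩ Set.Ici (x - δ))) ∩ suppF μ = ∅ ∧
      μ (Set.Ioo (sInf (suppF μ ∩ Set.Ici (x - δ)) + δ)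
        (sInf (suppF μ ∩ Set.Ici (x - δ)))) = 0 := by
    intro x hxS h0
    obtain ⟨hxT, hgap0⟩ := step x hxS h0
    have hAne : (suppF μ ∩ Set.Ici (x - δ)).Nonempty := by
      obtain ⟨s, hsS, hs⟩ := not_bddAbove_iff.mp hNBA (x - δ)
      exact ⟨s, hsS, hs.le⟩
    have hAclosed : IsClosed (suppF μ ∩ Set.Ici (x - δ)) := hSclosed.inter isClosed_Ici
    have hAbdd : BddBelow (suppF μ ∩ Set.Ici (x - δ)) := ⟨x - δ, fun y hy => hy.2⟩
    have hmem := hAclosed.csInf_mem hAne hAbdd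
    have hbS : sInf (suppF μ ∩ Set.Ici (x - δ)) ∈ suppF μ := hmem.1
    have hbge : x - δ ≤ sInf (suppF μ ∩ Set.Ici (x - δ)) := hmem.2
    have hgap1 : Set.Ioo x (sInf (suppF μ ∩ Set.Ici (x - δ))) ∩ suppF μ = ∅ := by
      rw [Set.eq_empty_iff_forall_notMem]
      rintro y ⟨hy1, hy2⟩
      rcases lt_or_ge y (x - δ) with h | h
      · exact Set.eq_empty_iff_forall_notMem.mp hgap0 y ⟨⟨hy1.1, h⟩, hy2⟩
      · exact absurd (csInf_le hAbdd ⟨hy2, h⟩) (not_le.mpr hy1.2)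
    refine ⟨hxT, hbge, hbS, hgap1, ?_⟩
    refine null_of_disjoint_suppF μ (Set.eq_empty_iff_forall_notMem.mpr ?_)
    rintro y ⟨hy1, hy2⟩
    refine Set.eq_empty_iff_forall_notMem.mp hgap1 y ⟨⟨?_, hy1.2⟩, hy2⟩
    have := hy1.1; linarith
  -- the sequence
  set a : ℕ → ℝ := fun n =>
    Nat.rec (sInf (suppF μ)) (fun _ p => sInf (suppF μ ∩ Set.Ici (p - δ))) n with haf
  have ha0 : a 0 = sInf (suppF μ) := rfl
  have hasucc : ∀ n, a (n + 1) = sInf (suppF μ ∩ Set.Ici (a n - δ)) := fun n => rfl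
  have inv : ∀ n, a n ∈ suppF μ ∧ μ (Set.Ioo (a n + δ) (a n)) = 0 := by
    intro n
    induction n with
    | zero =>
      refine ⟨hSclosed.csInf_mem hSne hBB, ?_⟩
      refine null_of_disjoint_suppF μ (Set.eq_empty_iff_forall_notMem.mpr ?_)
      rintro y ⟨hy1, hy2⟩
      exact absurd (csInf_le hBB hy2) (not_le.mpr hy1.2)
    | succ n ih =>
      obtain ⟨h1, h2, h3, h4, h5⟩ := build (a n) ih.1 ih.2
      rw [hasucc n]
      exact ⟨h3, h5⟩
  have hT : ∀ n, a n ∈ Tset μ δ := fun n => (build (a n) (inv n).1 (inv n).2).1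
  have hge : ∀ n, a n - δ ≤ a (n + 1) := by
    intro n; rw [hasucc n]; exact (build (a n) (inv n).1 (inv n).2).2.1
  have hgapset : ∀ n, Set.Ioo (a n) (a (n + 1)) ∩ suppF μ = ∅ := by
    intro n; rw [hasucc n]; exact (build (a n) (inv n).1 (inv n).2).2.2.2.1
  have hgapnull : ∀ n, μ (Set.Ioo (a n) (a (n + 1))) = 0 := fun n =>
    null_of_disjoint_suppF μ (hgapset n)
  have hmono : StrictMono a := strictMono_nat_of_lt_succ fun n => by linarith [hge n]
  refine ⟨a, hmono, ha0, ?_, ?_, ?_, ?_, ?_, ?_⟩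
  · intro n; rw [abs_of_neg hδ]; linarith [hge n]
  · -- suppF μ = range a
    apply subset_antisymm
    · intro s hsS
      have h0 : a 0 ≤ s := by rw [ha0]; exact csInf_le hBB hsS
      have hlin : ∀ n : ℕ, a 0 + n * (-δ) ≤ a n := by
        intro n; induction n with
        | zero => simp
        | succ n ih => have := hge n; push_cast; linarith
      have hex : ∃ n, s < a n := by
        obtain ⟨n, hn⟩ := exists_nat_gt ((s - a 0) / (-δ))
        refine ⟨n, ?_⟩
        have h1 := hlin n
        rw [div_lt_iff₀ (by linarith : (0:ℝ) < -δ)] at hn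
        linarith
      have hms : s < a (Nat.find hex) := Nat.find_spec hex
      have hm0 : Nat.find hex ≠ 0 := by
        intro h
        rw [h] at hms
        exact absurd h0 (not_le.mpr hms)
      obtain ⟨k, hk⟩ := Nat.exists_eq_succ_of_ne_zero hm0
      have hknot : ¬ s < a k := Nat.find_min hex (by omega)
      push_neg at hknot
      rcases eq_or_lt_of_le hknot with he | hlt
      · exact ⟨k, he⟩
      · exfalso
        have hsin : s ∈ Set.Ioo (a k) (a (k+1)) ∩ suppF μ :=
          ⟨⟨hlt, by rw [hk] at hms; exact hms⟩, hsS⟩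
        rw [hgapset k] at hsin
        exact Set.notMem_empty s hsin
    · rintro _ ⟨n, rfl⟩; exact (inv n).1
  · exact hNBA
  · exact hGpos (a 0)
  · -- survG (a 0) < 1
    have hatom : 0 < μ {a 0} := by
      by_contra h
      push_neg at h
      have hx0 : μ {a 0} = 0 := le_antisymm h zero_le
      have hpos := measure_pos_of_mem_suppF μ (inv 0).1
        (show a 0 + δ < a 0 by linarith) (show a 0 < a 0 - δ by linarith)
      have hsub : Set.Ioo (a 0 + δ) (a 0 - δ) ⊆
          (Set.Ioo (a 0 + δ) (a 0) ∪ {a 0}) ∪ Set.Ioo (a 0) (a 1) := by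
        intro t ht
        simp only [Set.mem_Ioo] at ht
        rcases lt_trichotomy t (a 0) with hh | hh | hh
        · exact Or.inl (Or.inl ⟨ht.1, hh⟩)
        · exact Or.inl (Or.inr (by rw [Set.mem_singleton_iff]; exact hh))
        · refine Or.inr ⟨hh, ?_⟩
          have h1 : a 0 - δ ≤ a 1 := hge 0
          have h2 := ht.2
          show t < a 1
          linarith
      have hzero : μ (Set.Ioo (a 0 + δ) (a 0 - δ)) = 0 :=
        measure_mono_null hsub
          (measure_union_null (measure_union_null (inv 0).2 hx0) (hgapnull 0))
      exact absurd hzero hpos.ne'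
    have hlt1 : μ (Set.Ioi (a 0)) < 1 := by
      have hdisj : Disjoint (Set.Ioi (a 0)) {a 0} := by
        rw [Set.disjoint_left]
        intro t ht ht'
        simp only [Set.mem_singleton_iff] at ht'
        subst ht'
        exact lt_irrefl _ (Set.mem_Ioi.mp ht)
      have hun : μ (Set.Ioi (a 0)) + μ {a 0} ≤ 1 := by
        rw [← measure_union hdisj (measurableSet_singleton _)]
        exact prob_le_one
      exact lt_of_lt_of_le (ENNReal.lt_add_right (measure_ne_top μ _) hatom.ne') hun
    have hfin := ENNReal.toReal_strict_mono (b := (1 : ENNReal)) ENNReal.one_ne_top hlt1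
    simpa [survG] using hfin
  · -- the product formula
    have e1 : ∀ n, survG μ (a (n+1) + δ) = survG μ (a n) := by
      intro n
      have hle : a n ≤ a (n+1) + δ := by linarith [hge n]
      have hnull : μ (Set.Ioc (a n) (a (n+1) + δ)) = 0 := by
        refine measure_mono_null (fun t ht => ?_) (hgapnull n)
        simp only [Set.mem_Ioc] at ht
        simp only [Set.mem_Ioo]
        exact ⟨ht.1, by linarith [ht.2]⟩
      have hd := survG_diff μ hle
      rw [hnull] at hd
      simp only [ENNReal.toReal_zero] at hd
      linarith
    have e2 : ∀ n, (∫ t in Set.Ioi (a n), survG μ t) - (∫ t in Set.Ioi (a (n+1)), survG μ t)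
        = (a (n+1) - a n) * survG μ (a n) := by
      intro n
      rw [Phi_sub μ hI (hmono (Nat.lt_succ_self n)).le]
      have hcongr : Set.EqOn (survG μ) (fun _ => survG μ (a n)) (Set.Ioo (a n) (a (n+1))) := by
        intro t ht
        simp only [Set.mem_Ioo] at ht
        have hnull : μ (Set.Ioc (a n) t) = 0 := by
          refine measure_mono_null (fun u hu => ?_) (hgapnull n)
          simp only [Set.mem_Ioc] at hu
          simp only [Set.mem_Ioo]
          exact ⟨hu.1, by linarith [hu.2, ht.2]⟩
        have hd := survG_diff μ ht.1.le
        rw [hnull] at hd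
        simp only [ENNReal.toReal_zero] at hd
        show survG μ t = survG μ (a n)
        linarith
      rw [MeasureTheory.integral_Ioc_eq_integral_Ioo,
        setIntegral_congr_fun measurableSet_Ioo hcongr, setIntegral_const, measureReal_def, Real.volume_Ioo,
        smul_eq_mul, ENNReal.toReal_ofReal (by linarith [hmono (Nat.lt_succ_self n)] :
          (0:ℝ) ≤ a (n+1) - a n)]
    have hrec : ∀ n, survG μ (a (n+1)) * (1 + c * (a (n+1+1) - a (n+1))) = survG μ (a n) := by
      intro n
      have h1 := hHz (a (n+1)) (hT (n+1))
      have h2 := hHz (a (n+1+1)) (hT (n+1+1))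
      rw [e1 n] at h1
      rw [e1 (n+1)] at h2
      have h3 := e2 (n+1)
      linear_combination h2 - h1 - c * h3
    have hpos1 : ∀ n : ℕ, (0:ℝ) < 1 + c * (a (n+1) - a n) := by
      intro n
      have := hmono (Nat.lt_succ_self n)
      nlinarith
    intro n hn
    induction n with
    | zero => omega
    | succ k ih =>
      rcases Nat.eq_zero_or_pos k with hk0 | hk1
      · subst hk0
        have h : survG μ (a 1) * (1 + c * (a (1+1) - a 1)) = survG μ (a 0) := hrec 0
        have hp := (hpos1 1).ne'
        rw [Finset.Icc_self, Finset.prod_singleton, ← h, mul_inv_cancel_right₀ hp]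
        rfl
      · have hih := ih hk1
        have h := hrec k
        rw [Finset.prod_Icc_succ_top (by omega : 1 ≤ k + 1), ← mul_assoc, ← hih,
          ← h, mul_inv_cancel_right₀ (hpos1 (k+1)).ne']
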